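/- Let ν be a σ-finite measure on a measurable space 𝒳, let h : 𝒳 → [0, ∞) and T : 𝒳 → ℝ^d be measurable, let W : ℝ^d → ℝ be twice continuously differentiable, and for θ ∈ ℝ^d write E_θ(x) := h(x)·exp(⟨θ, T(x)⟩ - W(θ)). Let Θ ⊆ ℝ^d be a convex set on which the family is normalized (∫ E_θ dν = 1 for every θ ∈ Θ), with P_θ the probability measure with ν-density E_θ. Suppose there are constants L > 0, λ > 0, β > 0 such that for every θ ∈ Θ: ‖∇W(θ)‖ ≤ L, ⟨v, ∇²W(θ) v⟩ ≤ λ‖v‖² for all v ∈ ℝ^d, and ∇W(θ) = ∫ T(x) dP_θ(x). Let θ₁, θ₂, θ* ∈ Θ, set m = (θ₁ + θ₂)/2, and assume the open Euclidean ball B(m, 1/(2β)) is contained in Θ and ‖θ₁ - θ*‖ < 1/(2β). Then for every t > 0, P_{θ*}[{x ∈ 𝒳 : E_{θ₁}(x) < t · E_{θ₂}(x)}] ≤ √t · exp( 2L‖θ₁ - θ*‖ + (λ/2)‖θ₁ - θ*‖² - ((W(θ₁) + W(θ₂))/2 - W(m)) ). -/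

import Mathlib

/-!
On `{E θ₁ < t E θ₂}` we have `1 < √t · √(E θ₂ / E θ₁)`, so `P θs` of this set is at most
`√t ∫ E θs √(E θ₂ / E θ₁) dν`. The integrand is, up to the factor
`exp (W q - W θs - (W θ₂ - W θ₁) / 2)`, the normalized density `E q` at the shifted midpoint
`q = m + (θs - θ₁)`, which lies in the ball around `m`. The exponent is then bounded by a
second-order Taylor bound for `W` along `[m, q]` and a Lipschitz bound for `W` on `[θ₁, θs]`.
-/

open MeasureTheory Set Real

lemma le_add_deriv_add_half_of_deriv2_le {g g' g'' : ℝ → ℝ} {C : ℝ}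
    (hg : ∀ s, HasDerivAt g (g' s) s) (hg' : ∀ s, HasDerivAt g' (g'' s) s)
    (hC : ∀ s ∈ Ioo (0 : ℝ) 1, g'' s ≤ C) :
    g 1 ≤ g 0 + g' 0 + C / 2 := by
  have hψ : ∀ s, HasDerivAt (fun s => C / 2 * s ^ 2 - g s) (C * s - g' s) s := fun s =>
    (((hasDerivAt_pow 2 s).const_mul (C / 2)).sub (hg s)).congr_deriv (by norm_num; ring)
  have hψ' : ∀ s, HasDerivAt (fun s => C * s - g' s) (C - g'' s) s := fun s =>
    (((hasDerivAt_id s).const_mul C).sub (hg' s)).congr_deriv (by simp)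
  -- `C s² / 2 - g` is convex on `[0, 1]`, so it lies above its tangent at `0`.
  have hconv : ConvexOn ℝ (Icc 0 1) (fun s => C / 2 * s ^ 2 - g s) := by
    refine convexOn_of_hasDerivWithinAt2_nonneg (convex_Icc 0 1)
      (fun s _ => (hψ s).continuousAt.continuousWithinAt)
      (fun s _ => (hψ s).hasDerivWithinAt) (fun s _ => (hψ' s).hasDerivWithinAt) ?_
    intro s hs
    rw [interior_Icc] at hs
    linarith [hC s hs]
  have := hconv.le_slope_of_hasDerivAt (by simp) (by simp) one_pos (hψ 0)
  rw [slope_def_field] at this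
  norm_num at this
  linarith

lemma le_add_fderiv_add_of_iteratedFDeriv_two_le {E : Type*} [NormedAddCommGroup E]
    [NormedSpace ℝ E] {W : E → ℝ} (hW : ContDiff ℝ 2 W) {x v : E} {C : ℝ}
    (hC : ∀ s ∈ Ioo (0 : ℝ) 1, iteratedFDeriv ℝ 2 W (x + s • v) ![v, v] ≤ C) :
    W (x + v) ≤ W x + fderiv ℝ W x v + C / 2 := by
  have hline : ∀ s : ℝ, HasDerivAt (fun s : ℝ => x + s • v) v s := fun s => by
    simpa using ((hasDerivAt_id s).smul_const v).const_add x
  have hg : ∀ s : ℝ, HasDerivAt (fun s => W (x + s • v)) (fderiv ℝ W (x + s • v) v) s :=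
    fun s => ((hW.differentiable two_ne_zero _).hasFDerivAt).comp_hasDerivAt s (hline s)
  have hg' : ∀ s : ℝ, HasDerivAt (fun s => fderiv ℝ W (x + s • v) v)
      (iteratedFDeriv ℝ 2 W (x + s • v) ![v, v]) s := fun s => by
    have hD : HasFDerivAt (fderiv ℝ W) (fderiv ℝ (fderiv ℝ W) (x + s • v)) (x + s • v) :=
      ((hW.fderiv_right (m := 1) le_rfl).differentiable one_ne_zero _).hasFDerivAt
    have h1 : HasDerivAt (fun s => fderiv ℝ W (x + s • v))
        (fderiv ℝ (fderiv ℝ W) (x + s • v) v) s :=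
      hD.comp_hasDerivAt s (hline s)
    rw [iteratedFDeriv_two_apply]
    simpa using h1.clm_apply (hasDerivAt_const s v)
  simpa using le_add_deriv_add_half_of_deriv2_le hg hg' hC

lemma le_add_mul_norm_add_of_norm_gradient_le {F : Type*} [NormedAddCommGroup F]
    [InnerProductSpace ℝ F] [CompleteSpace F] {W : F → ℝ} (hW : ContDiff ℝ 2 W) {x v : F}
    {L C : ℝ} (hgrad : ‖gradient W x‖ ≤ L)
    (hC : ∀ s ∈ Ioo (0 : ℝ) 1, iteratedFDeriv ℝ 2 W (x + s • v) ![v, v] ≤ C) :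
    W (x + v) ≤ W x + L * ‖v‖ + C / 2 := by
  have hfderiv : fderiv ℝ W x v ≤ L * ‖v‖ := by
    rw [← inner_gradient_left]
    exact (real_inner_le_norm _ _).trans (by gcongr)
  linarith [le_add_fderiv_add_of_iteratedFDeriv_two_le hW hC]

lemma Convex.norm_image_sub_le_of_norm_gradient_le {F : Type*} [NormedAddCommGroup F]
    [InnerProductSpace ℝ F] [CompleteSpace F] {f : F → ℝ} {s : Set F} {x y : F} {C : ℝ}
    (hf : ∀ z ∈ s, DifferentiableAt ℝ f z) (bound : ∀ z ∈ s, ‖gradient f z‖ ≤ C)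
    (hs : Convex ℝ s) (hx : x ∈ s) (hy : y ∈ s) : ‖f y - f x‖ ≤ C * ‖y - x‖ :=
  hs.norm_image_sub_le_of_norm_fderiv_le hf
    (fun z hz => by simpa [← toDual_gradient] using bound z hz) hx hy

lemma withDensity_ofReal_le_of_le_mul {α : Type*} [MeasurableSpace α] {ν : Measure α}
    {f g : α → ℝ} {A : Set α} {K : ℝ} (hA : MeasurableSet A) (hg_nonneg : ∀ x, 0 ≤ g x)
    (hg_int : ∫ x, g x ∂ν = 1) (hK : 0 ≤ K) (hfg : ∀ x ∈ A, f x ≤ K * g x) :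
    ν.withDensity (fun x => ENNReal.ofReal (f x)) A ≤ ENNReal.ofReal K := by
  have hg : ∫⁻ x, ENNReal.ofReal (g x) ∂ν = 1 := by
    rw [← ofReal_integral_eq_lintegral_ofReal
      (Integrable.of_integral_ne_zero (by simp [hg_int])) (ae_of_all _ hg_nonneg), hg_int,
      ENNReal.ofReal_one]
  calc ν.withDensity (fun x => ENNReal.ofReal (f x)) A
      = ∫⁻ x in A, ENNReal.ofReal (f x) ∂ν := withDensity_apply _ hA
    _ ≤ ∫⁻ x in A, ENNReal.ofReal K * ENNReal.ofReal (g x) ∂ν :=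
        setLIntegral_mono' hA fun x hx => by
          rw [← ENNReal.ofReal_mul hK]
          exact ENNReal.ofReal_le_ofReal (hfg x hx)
    _ ≤ ∫⁻ x, ENNReal.ofReal K * ENNReal.ofReal (g x) ∂ν := setLIntegral_le_lintegral _ _
    _ = ENNReal.ofReal K := by
        rw [lintegral_const_mul' _ _ ENNReal.ofReal_ne_top, hg, mul_one]

section ExpFamily

variable {𝒳 V : Type*} [NormedAddCommGroup V] [InnerProductSpace ℝ V]

noncomputable def expFamilyDensity (h : 𝒳 → ℝ) (T : 𝒳 → V) (W : V → ℝ) (θ : V) (x : 𝒳) : ℝ :=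
  h x * exp (inner ℝ θ (T x) - W θ)

lemma measurable_expFamilyDensity [MeasurableSpace 𝒳] [MeasurableSpace V]
    [OpensMeasurableSpace V] {h : 𝒳 → ℝ} {T : 𝒳 → V} (hh : Measurable h) (hT : Measurable T)
    (W : V → ℝ) (θ : V) : Measurable (expFamilyDensity h T W θ) :=
  hh.mul (measurable_exp.comp
    (((continuous_const.inner continuous_id).measurable.comp hT).sub measurable_const))

lemma expFamilyDensity_le_of_lt {h : 𝒳 → ℝ} {T : 𝒳 → V} {W : V → ℝ} {x : 𝒳} (hh : 0 ≤ h x)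
    (θ : V) {θ₁ θ₂ : V} {t : ℝ}
    (hx : expFamilyDensity h T W θ₁ x < t * expFamilyDensity h T W θ₂ x) :
    expFamilyDensity h T W θ x ≤
      √t * exp (W (θ + (1 / 2 : ℝ) • (θ₂ - θ₁)) - W θ - (W θ₂ - W θ₁) / 2) *
        expFamilyDensity h T W (θ + (1 / 2 : ℝ) • (θ₂ - θ₁)) x := by
  unfold expFamilyDensity at *
  have hhx : 0 < h x := hh.lt_of_ne fun h0 => by simp [← h0] at hx
  have hexp : exp (inner ℝ θ₁ (T x) - W θ₁) < t * exp (inner ℝ θ₂ (T x) - W θ₂) := by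
    rw [mul_left_comm] at hx
    exact lt_of_mul_lt_mul_left hx hhx.le
  have ht : 0 < t := pos_of_mul_pos_left ((exp_pos _).trans hexp) (exp_pos _).le
  have hlog : inner ℝ θ₁ (T x) - W θ₁ < log t + (inner ℝ θ₂ (T x) - W θ₂) := by
    rwa [← exp_lt_exp, exp_add, exp_log ht]
  rw [sqrt_eq_rpow, rpow_def_of_pos ht, mul_left_comm, mul_assoc, ← exp_add, ← exp_add,
    inner_add_left, real_inner_smul_left, inner_sub_left]
  gcongr
  linarith

end ExpFamily

theorem stmt_15_general {d : ℕ} {𝒳 : Type*} [MeasurableSpace 𝒳]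
    (ν : Measure 𝒳)
    (h : 𝒳 → ℝ) (hh_nonneg : ∀ x, 0 ≤ h x) (hh_meas : Measurable h)
    (T : 𝒳 → EuclideanSpace ℝ (Fin d)) (hT_meas : Measurable T)
    (W : EuclideanSpace ℝ (Fin d) → ℝ) (hW : ContDiff ℝ 2 W)
    (E : EuclideanSpace ℝ (Fin d) → 𝒳 → ℝ)
    (hE : ∀ θ x, E θ x = h x * Real.exp ((inner ℝ θ (T x) : ℝ) - W θ))
    (Θ : Set (EuclideanSpace ℝ (Fin d))) (hΘ : Convex ℝ Θ)
    (hnorm : ∀ θ ∈ Θ, ∫ x, E θ x ∂ν = 1)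
    (P : EuclideanSpace ℝ (Fin d) → Measure 𝒳)
    (hP : ∀ θ, P θ = ν.withDensity (fun x => ENNReal.ofReal (E θ x)))
    (L lam β : ℝ)
    (hgradL : ∀ θ ∈ Θ, ‖gradient W θ‖ ≤ L)
    (hhess : ∀ θ ∈ Θ, ∀ v : EuclideanSpace ℝ (Fin d),
      iteratedFDeriv ℝ 2 W θ ![v, v] ≤ lam * ‖v‖ ^ 2)
    (θ₁ θ₂ θs : EuclideanSpace ℝ (Fin d))
    (hθ₁ : θ₁ ∈ Θ) (hθs : θs ∈ Θ)
    (m : EuclideanSpace ℝ (Fin d)) (hm : m = (1 / 2 : ℝ) • (θ₁ + θ₂))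
    (hball : Metric.ball m (1 / (2 * β)) ⊆ Θ)
    (hclose : ‖θ₁ - θs‖ < 1 / (2 * β))
    (t : ℝ) :
    P θs {x | E θ₁ x < t * E θ₂ x} ≤
      ENNReal.ofReal (Real.sqrt t *
        Real.exp (2 * L * ‖θ₁ - θs‖ + (lam / 2) * ‖θ₁ - θs‖ ^ 2 -
          ((W θ₁ + W θ₂) / 2 - W m))) := by
  obtain rfl : E = expFamilyDensity h T W := funext fun θ => funext (hE θ)
  set δ := θs - θ₁
  have hq : θs + (1 / 2 : ℝ) • (θ₂ - θ₁) = m + δ := by rw [hm]; module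
  have hseg : ∀ s ∈ Icc (0 : ℝ) 1, m + s • δ ∈ Θ := fun s hs =>
    hball <| (convex_ball m _).add_smul_mem
      (Metric.mem_ball_self ((norm_nonneg _).trans_lt hclose))
      (by simpa [δ, norm_sub_rev] using hclose) hs
  have hTaylor : W (m + δ) ≤ W m + L * ‖δ‖ + lam * ‖δ‖ ^ 2 / 2 :=
    le_add_mul_norm_add_of_norm_gradient_le hW (hgradL m (by simpa using hseg 0 (by simp)))
      fun s hs => hhess _ (hseg s (Ioo_subset_Icc_self hs)) δ
  have hLip : |W θ₁ - W θs| ≤ L * ‖δ‖ := by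
    simpa [δ, norm_sub_rev θs] using hΘ.norm_image_sub_le_of_norm_gradient_le
      (fun z _ => hW.differentiable two_ne_zero z) hgradL hθs hθ₁
  have hA : MeasurableSet {x | expFamilyDensity h T W θ₁ x < t * expFamilyDensity h T W θ₂ x} :=
    measurableSet_lt (measurable_expFamilyDensity hh_meas hT_meas W θ₁)
      ((measurable_expFamilyDensity hh_meas hT_meas W θ₂).const_mul t)
  have hnorm_q : ∫ x, expFamilyDensity h T W (m + δ) x ∂ν = 1 :=
    hnorm _ (by simpa using hseg 1 (by simp))
  rw [hP]
  refine (withDensity_ofReal_le_of_le_mul hA (fun x => mul_nonneg (hh_nonneg x) (exp_pos _).le)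
    (hq ▸ hnorm_q) (by positivity) fun x hx => expFamilyDensity_le_of_lt (hh_nonneg x) θs hx).trans
    (ENNReal.ofReal_le_ofReal (mul_le_mul_of_nonneg_left (exp_le_exp.2 ?_) (sqrt_nonneg t)))
  rw [hq, norm_sub_rev]
  linarith [le_abs_self (W θ₁ - W θs)]

theorem stmt_15 {d : ℕ} {𝒳 : Type*} [MeasurableSpace 𝒳]
    (ν : Measure 𝒳) [SigmaFinite ν]
    (h : 𝒳 → ℝ) (hh_nonneg : ∀ x, 0 ≤ h x) (hh_meas : Measurable h)
    (T : 𝒳 → EuclideanSpace ℝ (Fin d)) (hT_meas : Measurable T)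
    (W : EuclideanSpace ℝ (Fin d) → ℝ) (hW : ContDiff ℝ 2 W)
    (E : EuclideanSpace ℝ (Fin d) → 𝒳 → ℝ)
    (hE : ∀ θ x, E θ x = h x * Real.exp ((inner ℝ θ (T x) : ℝ) - W θ))
    (Θ : Set (EuclideanSpace ℝ (Fin d))) (hΘ : Convex ℝ Θ)
    (hnorm : ∀ θ ∈ Θ, ∫ x, E θ x ∂ν = 1)
    (P : EuclideanSpace ℝ (Fin d) → Measure 𝒳)
    (hP : ∀ θ, P θ = ν.withDensity (fun x => ENNReal.ofReal (E θ x)))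
    (L lam β : ℝ) (hL : 0 < L) (hlam : 0 < lam) (hβ : 0 < β)
    (hgradL : ∀ θ ∈ Θ, ‖gradient W θ‖ ≤ L)
    (hhess : ∀ θ ∈ Θ, ∀ v : EuclideanSpace ℝ (Fin d),
      iteratedFDeriv ℝ 2 W θ ![v, v] ≤ lam * ‖v‖ ^ 2)
    (hgrad : ∀ θ ∈ Θ, gradient W θ = ∫ x, T x ∂(P θ))
    (θ₁ θ₂ θs : EuclideanSpace ℝ (Fin d))
    (hθ₁ : θ₁ ∈ Θ) (hθ₂ : θ₂ ∈ Θ) (hθs : θs ∈ Θ)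
    (m : EuclideanSpace ℝ (Fin d)) (hm : m = (1 / 2 : ℝ) • (θ₁ + θ₂))
    (hball : Metric.ball m (1 / (2 * β)) ⊆ Θ)
    (hclose : ‖θ₁ - θs‖ < 1 / (2 * β))
    (t : ℝ) (ht : 0 < t) :
    P θs {x | E θ₁ x < t * E θ₂ x} ≤
      ENNReal.ofReal (Real.sqrt t *
        Real.exp (2 * L * ‖θ₁ - θs‖ + (lam / 2) * ‖θ₁ - θs‖ ^ 2 -
          ((W θ₁ + W θ₂) / 2 - W m))) :=
  stmt_15_general ν h hh_nonneg hh_meas T hT_meas W hW E hE Θ hΘ hnorm P hP L lam β hgradL hhess θ₁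
    θ₂ θs hθ₁ hθs m hm hball hclose t
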